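/- Suppose E ≥ 0 and the gradient ∇E is continuous (e.g. L-Lipschitz). If x* is a cluster point of the MM iterates (x_n), i.e. the limit of some subsequence x_{n_k} → x*, then x* is a stationary point of the cost: Aᴴ(A x* − b) + ∇E(x*) = 0. -/

import Mathlib

open ContinuousLinearMap Filter Topology

lemma descent_aux {H : Type*} [NormedAddCommGroup H] [InnerProductSpace ℂ H]
    (E : H → ℝ) (E' : H → H) (L : ℝ) (hL : 0 ≤ L)
    (hE : ∀ x : H,
      HasFDerivAt E (Complex.reCLM.comp ((innerSL ℂ (E' x)).restrictScalars ℝ)) x)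
    (hLip : LipschitzWith L.toNNReal E') (u v : H) :
    E v ≤ E u + Complex.re (inner ℂ (E' u) (v - u) : ℂ) + L/2 * ‖v - u‖^2 := by
  set d := v - u with hd
  set c := Complex.re (inner ℂ (E' u) d : ℂ) with hc
  have hline : ∀ t : ℝ, HasDerivAt (fun t : ℝ => u + t • d) d t := fun t => by
    simpa using ((hasDerivAt_id t).smul_const d).const_add u
  have hg : ∀ t : ℝ, HasDerivAt (fun t : ℝ => E (u + t • d))
      (Complex.re (inner ℂ (E' (u + t • d)) d : ℂ)) t := by
    intro t
    have := (hE (u + t • d)).comp_hasDerivAt t (hline t)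
    simp at this; exact this
  set φ : ℝ → ℝ := fun t => E (u + t • d) - t * c - L/2 * ‖d‖^2 * t^2 with hφ
  have hφ' : ∀ t : ℝ, HasDerivAt φ
      (Complex.re (inner ℂ (E' (u + t • d)) d : ℂ) - c - L/2 * ‖d‖^2 * (2*t)) t := by
    intro t
    have h1 := (hg t).sub (hasDerivAt_mul_const c)
    have h2 : HasDerivAt (fun t : ℝ => L/2 * ‖d‖^2 * t^2) (L/2 * ‖d‖^2 * (2*t)) t := by
      simpa using (hasDerivAt_pow 2 t).const_mul (L/2 * ‖d‖^2)
    exact h1.sub h2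
  have hanti : AntitoneOn φ (Set.Icc (0:ℝ) 1) := by
    apply antitoneOn_of_deriv_nonpos (convex_Icc 0 1)
    · exact (fun t _ => ((hφ' t).differentiableAt).continuousAt.continuousWithinAt)
    · exact fun t _ => (hφ' t).differentiableAt.differentiableWithinAt
    · intro t ht
      rw [interior_Icc] at ht
      rw [(hφ' t).deriv]
      have hre : Complex.re (inner ℂ (E' (u + t • d)) d : ℂ) - c
          = Complex.re (inner ℂ (E' (u + t • d) - E' u) d : ℂ) := by
        rw [inner_sub_left, Complex.sub_re, hc]
      have hCS : Complex.re (inner ℂ (E' (u + t • d) - E' u) d : ℂ)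
          ≤ ‖E' (u + t • d) - E' u‖ * ‖d‖ := by
        calc Complex.re (inner ℂ (E' (u + t • d) - E' u) d : ℂ)
            ≤ ‖(inner ℂ (E' (u + t • d) - E' u) d : ℂ)‖ := Complex.re_le_norm _
          _ ≤ ‖E' (u + t • d) - E' u‖ * ‖d‖ := norm_inner_le_norm _ _
      have hlip2 : ‖E' (u + t • d) - E' u‖ ≤ L * (t * ‖d‖) := by
        have := hLip.dist_le_mul (u + t • d) u
        rw [Real.coe_toNNReal _ hL] at this
        simpa [dist_eq_norm, norm_smul, abs_of_nonneg ht.1.le, mul_assoc] using this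
      have hdn : (0:ℝ) ≤ ‖d‖ := norm_nonneg _
      nlinarith [hCS, hre, hlip2]
  have h01 : φ 1 ≤ φ 0 := hanti (by norm_num) (by norm_num) (by norm_num)
  have e1 : u + (1:ℝ) • d = v := by simp [hd]
  have e0 : u + (0:ℝ) • d = u := by simp
  rw [hφ] at h01
  simp only [e1, e0, one_pow, mul_one, one_mul] at h01
  linarith [h01]

/-- Suppose E ≥ 0 and ∇E is L-Lipschitz (hence continuous). If x*
is a cluster point of the MM iterates (x_n), i.e. the limit of some subsequence
x_{n_k} → x*, then x* is a stationary point of the cost: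
Aᴴ(A x* − b) + ∇E(x*) = 0. -/
theorem deepen_mm_cluster_point_stationary
    {H K : Type*} [NormedAddCommGroup H] [InnerProductSpace ℂ H] [FiniteDimensional ℂ H]
    [NormedAddCommGroup K] [InnerProductSpace ℂ K] [FiniteDimensional ℂ K]
    (A : H →L[ℂ] K) (b : K) (E : H → ℝ) (E' : H → H) (L : ℝ) (hL : 0 < L)
    (hE : ∀ x : H,
      HasFDerivAt E (Complex.reCLM.comp ((innerSL ℂ (E' x)).restrictScalars ℝ)) x)
    (hLip : LipschitzWith L.toNNReal E')
    (hE0 : ∀ z : H, 0 ≤ E z)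
    (x : ℕ → H)
    (hx : ∀ n : ℕ, ((ContinuousLinearMap.adjoint A).comp A
        + (L : ℂ) • ContinuousLinearMap.id ℂ H) (x (n + 1))
      = ContinuousLinearMap.adjoint A b + L • x n - E' (x n))
    (xstar : H) (φ : ℕ → ℕ) (hφ : StrictMono φ)
    (hlim : Tendsto (fun k : ℕ => x (φ k)) atTop (𝓝 xstar)) :
    ContinuousLinearMap.adjoint A (A xstar - b) + E' xstar = 0 := by
  set F : H → ℝ := fun z => ‖A z - b‖^2 / 2 + E z with hF
  -- the key monotone-decrease estimate
  have key : ∀ n : ℕ, F (x (n+1)) + L/2 * ‖x (n+1) - x n‖^2 ≤ F (x n) := by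
    intro n
    set u := x n
    set v := x (n+1)
    have heq : ContinuousLinearMap.adjoint A (A v) + L • v
        = ContinuousLinearMap.adjoint A b + L • u - E' u := by
      have hsm : ((L:ℂ)) • v = L • v := Complex.coe_smul L v
      simpa [add_apply, comp_apply, smul_apply, id_apply, hsm] using hx n
    have hcval : Complex.re (inner ℂ (E' u) (v - u) : ℂ)
        = Complex.re (inner ℂ (A v - b) (A (u - v)) : ℂ) - L * ‖v - u‖^2 := by
      have hEu : E' u = ContinuousLinearMap.adjoint A (b - A v) + L • (u - v) := by
        have h : E' u = (ContinuousLinearMap.adjoint A b + L • u)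
            - (ContinuousLinearMap.adjoint A (A v) + L • v) := by rw [heq]; abel
        rw [h, map_sub, smul_sub]; abel
      rw [hEu, inner_add_left]
      have h1 : (inner ℂ (ContinuousLinearMap.adjoint A (b - A v)) (v - u) : ℂ)
          = inner ℂ (b - A v) (A (v - u)) := ContinuousLinearMap.adjoint_inner_left _ _ _
      have hnegA : A (u - v) = -(A (v - u)) := by rw [map_sub, map_sub]; abel
      have h2 : (inner ℂ (b - A v) (A (v - u)) : ℂ) = inner ℂ (A v - b) (A (u - v)) := by
        rw [show b - A v = -(A v - b) by abel, hnegA, inner_neg_left, inner_neg_right]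
      have h3 : (inner ℂ (L • (u - v)) (v - u) : ℂ) = (L : ℂ) * inner ℂ (u - v) (v - u) := by
        rw [← Complex.coe_smul, inner_smul_left, Complex.conj_ofReal]
      have h4 : (inner ℂ ((u:H) - v) (v - u) : ℂ) = - (inner ℂ (v - u) (v - u) : ℂ) := by
        rw [show u - v = -(v - u) by abel, inner_neg_left]
      rw [Complex.add_re, h1, h2, h3, h4]
      have h5 : Complex.re ((L:ℂ) * -(inner ℂ (v-u) (v-u) : ℂ)) = - (L * ‖v - u‖^2) := by
        have hself : (inner ℂ (v-u) (v-u) : ℂ).re = ‖v-u‖^2 := by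
          simpa using @inner_self_eq_norm_sq ℂ _ _ _ _ (v-u)
        rw [Complex.mul_re]
        simp only [Complex.neg_re, Complex.neg_im, Complex.ofReal_re, Complex.ofReal_im, hself]; ring
      rw [h5]; ring
    have hnorm : ‖A u - b‖^2
        = ‖A v - b‖^2 + 2 * Complex.re (inner ℂ (A v - b) (A (u - v)) : ℂ) + ‖A (u - v)‖^2 := by
      have hs : A u - b = (A v - b) + A (u - v) := by rw [map_sub]; abel
      rw [hs]
      have := @norm_add_sq ℂ _ _ _ _ (A v - b) (A (u - v))
      exact this
    have hE2 := descent_aux E E' L hL.le hE hLip u v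
    have hAsq : (0:ℝ) ≤ ‖A (u - v)‖^2 := sq_nonneg _
    simp only [hF]
    nlinarith [hE2, hcval, hnorm, hAsq]
  -- F is nonnegative
  have hFnonneg : ∀ z, 0 ≤ F z := fun z => by
    have h1 := hE0 z
    simp only [hF]
    positivity
  -- partial sums bounded
  have hsum : ∀ N : ℕ, ∑ n ∈ Finset.range N, (L/2 * ‖x (n+1) - x n‖^2) ≤ F (x 0) := by
    intro N
    have h : ∀ N : ℕ, ∑ n ∈ Finset.range N, (L/2 * ‖x (n+1) - x n‖^2) + F (x N) ≤ F (x 0) := by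
      intro N
      induction N with
      | zero => simp
      | succ N ih =>
        rw [Finset.sum_range_succ]
        have := key N
        linarith
    exact le_trans (le_add_of_nonneg_right (hFnonneg (x N))) (h N)
  have hsummable : Summable (fun n : ℕ => L/2 * ‖x (n+1) - x n‖^2) :=
    summable_of_sum_range_le (fun n => by positivity) hsum
  have htend0 : Tendsto (fun n : ℕ => L/2 * ‖x (n+1) - x n‖^2) atTop (𝓝 0) :=
    hsummable.tendsto_atTop_zero
  have hsq0 : Tendsto (fun n : ℕ => ‖x (n+1) - x n‖^2) atTop (𝓝 0) := by
    have := htend0.const_mul (2/L)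
    simp only [mul_zero] at this
    convert this using 2 with n
    field_simp
  have hn0 : Tendsto (fun n : ℕ => ‖x (n+1) - x n‖) atTop (𝓝 0) := by
    have hsqrt : Tendsto (fun n : ℕ => Real.sqrt (‖x (n+1) - x n‖^2)) atTop (𝓝 (Real.sqrt 0)) :=
      (Real.continuous_sqrt.tendsto 0).comp hsq0
    rw [Real.sqrt_zero] at hsqrt
    convert hsqrt using 2 with n
    rw [Real.sqrt_sq (norm_nonneg _)]
  have hD : Tendsto (fun n : ℕ => x (n+1) - x n) atTop (𝓝 0) :=
    tendsto_zero_iff_norm_tendsto_zero.mpr hn0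
  have hDφ : Tendsto (fun k : ℕ => x (φ k + 1) - x (φ k)) atTop (𝓝 0) :=
    hD.comp hφ.tendsto_atTop
  have hlim2 : Tendsto (fun k : ℕ => x (φ k + 1)) atTop (𝓝 xstar) := by
    have := hDφ.add hlim
    simp only [zero_add] at this
    convert this using 2 with k
    abel
  set M := (ContinuousLinearMap.adjoint A).comp A + (L : ℂ) • ContinuousLinearMap.id ℂ H with hM
  have hLHS : Tendsto (fun k : ℕ => M (x (φ k + 1))) atTop (𝓝 (M xstar)) :=
    (M.continuous.tendsto xstar).comp hlim2
  have hRHS : Tendsto (fun k : ℕ => ContinuousLinearMap.adjoint A b + L • x (φ k) - E' (x (φ k)))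
      atTop (𝓝 (ContinuousLinearMap.adjoint A b + L • xstar - E' xstar)) := by
    exact ((tendsto_const_nhds.add (hlim.const_smul L)).sub
      ((hLip.continuous.tendsto xstar).comp hlim))
  have heqfun : (fun k : ℕ => M (x (φ k + 1)))
      = fun k : ℕ => ContinuousLinearMap.adjoint A b + L • x (φ k) - E' (x (φ k)) := by
    funext k; exact hx (φ k)
  rw [heqfun] at hLHS
  have hfinal : M xstar = ContinuousLinearMap.adjoint A b + L • xstar - E' xstar :=
    tendsto_nhds_unique hLHS hRHS
  have hMx : M xstar = ContinuousLinearMap.adjoint A (A xstar) + L • xstar := by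
    have hsm : ((L:ℂ)) • xstar = L • xstar := Complex.coe_smul L xstar
    simp [hM, add_apply, comp_apply, smul_apply, id_apply, hsm]
  rw [hMx] at hfinal
  rw [map_sub]
  have : ContinuousLinearMap.adjoint A (A xstar)
      = ContinuousLinearMap.adjoint A b - E' xstar := by
    have h2 : ContinuousLinearMap.adjoint A (A xstar) + L • xstar
        = (ContinuousLinearMap.adjoint A b - E' xstar) + L • xstar := by
      rw [hfinal]; abel
    exact add_right_cancel h2
  rw [this]; abel
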